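/- arXiv:2310.19129 — 6 statements merged into one kernel-verified Lean document; each statement's English description precedes it below -/
import Mathlib

section
/- Let (X,d) be a compact metric space, A a closed subset of X, and ∼ the equivalence relation collapsing A to a point. Then the topology on X/∼ induced by the metric D_A (defined by D_A([x],[y]) = 0 if x,y ∈ A; d(x,A) if x ∉ A, y ∈ A; d(A,y) if x ∈ A, y ∉ A; min{d(x,y), d(x,A)+d(A,y)} otherwise) coincides with the quotient topology on X/∼ induced by the quotient map q : X → X/∼. -/
open Metric

/-- The equivalence relation collapsing `A` to a point. -/
def collapseRel {X : Type*} (A : Set X) (x y : X) : Prop :=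
  x = y ∨ (x ∈ A ∧ y ∈ A)

/-- The function `D_A` on `X` induced by collapsing a closed set `A` to a point. -/
noncomputable def DA {X : Type*} [MetricSpace X] (A : Set X) (x y : X) : ℝ := by
  classical
  exact if x ∈ A then (if y ∈ A then 0 else infDist y A)
    else (if y ∈ A then infDist x A else min (dist x y) (infDist x A + infDist y A))

/-!
A set open in the quotient topology pulls back to an open set `V ⊆ X` that either contains `A`
or misses it. In the first case a `D_A`-ball around `x` lies in the union of a metric ball around
`x` and a thickening of the compact set `A`, both inside `V`. In the second case `x` is at positive
distance from `A`, and `D_A`-balls around `x` of radius below `d(x, A)` are metric balls. Conversely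
`D_A ≤ d`, so `D_A`-open sets are open.
-/

section DA

variable {X : Type*} [MetricSpace X] {A : Set X}

lemma DA_nonneg (A : Set X) (x y : X) : 0 ≤ DA A x y := by
  unfold DA
  split_ifs
  · exact le_rfl
  · exact infDist_nonneg
  · exact infDist_nonneg
  · exact le_min dist_nonneg (add_nonneg infDist_nonneg infDist_nonneg)

lemma DA_le_dist (A : Set X) (x y : X) : DA A x y ≤ dist x y := by
  unfold DA
  split_ifs with hx hy hy
  · exact dist_nonneg
  · exact (infDist_le_dist_of_mem hx).trans_eq (dist_comm y x)
  · exact infDist_le_dist_of_mem hy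
  · exact min_le_left _ _

lemma dist_lt_or_infDist_lt_of_DA_lt {x y : X} {ε : ℝ} (h : DA A x y < ε) :
    dist x y < ε ∨ infDist y A < ε := by
  have hε : 0 < ε := (DA_nonneg A x y).trans_lt h
  by_cases hy : y ∈ A
  · exact Or.inr ((infDist_zero_of_mem hy).trans_lt hε)
  by_cases hx : x ∈ A
  · simp only [DA, hx, hy, if_true, if_false] at h
    exact Or.inr h
  · simp only [DA, hx, hy, if_false, min_lt_iff] at h
    exact h.imp id (le_add_of_nonneg_left infDist_nonneg).trans_lt

lemma dist_eq_DA_of_DA_lt_infDist {x y : X} (h : DA A x y < infDist x A) :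
    dist x y = DA A x y := by
  have hx : x ∉ A := fun hx => by
    simp only [infDist_zero_of_mem hx] at h
    exact h.not_ge (DA_nonneg A x y)
  by_cases hy : y ∈ A
  · simp only [DA, hx, hy, if_true, if_false] at h
    exact absurd h (lt_irrefl _)
  · simp only [DA, hx, hy, if_false] at h ⊢
    refine (min_eq_left ?_).symm
    by_contra! hlt
    rw [min_eq_right hlt.le] at h
    exact h.not_ge (le_add_of_nonneg_right infDist_nonneg)

lemma exists_DA_lt_imp_mem_of_subset (hA : IsCompact A) (hAne : A.Nonempty) {V : Set X}
    (hV : IsOpen V) (hAV : A ⊆ V) {x : X} (hx : x ∈ V) :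
    ∃ ε > 0, ∀ y, DA A x y < ε → y ∈ V := by
  obtain ⟨r, hr, hball⟩ := Metric.isOpen_iff.1 hV x hx
  obtain ⟨δ, hδ, hthick⟩ := hA.exists_thickening_subset_open hV hAV
  refine ⟨min r δ, lt_min hr hδ, fun y hy => ?_⟩
  rcases dist_lt_or_infDist_lt_of_DA_lt hy with h | h
  · exact hball (mem_ball'.2 (h.trans_le (min_le_left r δ)))
  · exact hthick ((mem_thickening_iff_infDist_lt hAne).2 (h.trans_le (min_le_right r δ)))

lemma exists_DA_lt_imp_mem_of_disjoint (hA : IsClosed A) (hAne : A.Nonempty) {V : Set X}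
    (hV : IsOpen V) (hAV : Disjoint A V) {x : X} (hx : x ∈ V) :
    ∃ ε > 0, ∀ y, DA A x y < ε → y ∈ V := by
  obtain ⟨r, hr, hball⟩ := Metric.isOpen_iff.1 hV x hx
  have hxA : 0 < infDist x A :=
    (hA.notMem_iff_infDist_pos hAne).1 fun hxA => hAV.notMem_of_mem_left hxA hx
  refine ⟨min r (infDist x A), lt_min hr hxA, fun y hy => hball (mem_ball'.2 ?_)⟩
  rw [dist_eq_DA_of_DA_lt_infDist (hy.trans_le (min_le_right _ _))]
  exact hy.trans_le (min_le_left _ _)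

lemma isOpen_of_forall_DA_lt_imp_mem (A : Set X) {V : Set X}
    (h : ∀ x ∈ V, ∃ ε > 0, ∀ y, DA A x y < ε → y ∈ V) : IsOpen V := by
  refine Metric.isOpen_iff.2 fun x hx => ?_
  obtain ⟨ε, hε, hV⟩ := h x hx
  exact ⟨ε, hε, fun y hy => hV y ((DA_le_dist A x y).trans_lt (mem_ball'.1 hy))⟩

end DA

lemma subset_or_disjoint_preimage_quot_mk {X : Type*} (A : Set X)
    (U : Set (Quot (collapseRel A))) :
    A ⊆ Quot.mk (collapseRel A) ⁻¹' U ∨ Disjoint A (Quot.mk (collapseRel A) ⁻¹' U) := by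
  refine or_iff_not_imp_right.2 fun h b hb => ?_
  obtain ⟨a, ha, haU⟩ := Set.not_disjoint_iff.1 h
  have hba : Quot.mk (collapseRel A) b = Quot.mk (collapseRel A) a :=
    Quot.sound (Or.inr ⟨hb, ha⟩)
  rwa [Set.mem_preimage, hba]

/-- The topology on `X/∼` induced by the metric `D_A` coincides with the quotient
topology: a set `U ⊆ X/∼` is open in the quotient topology iff it is open in the
metric sense for `D_A`. -/
theorem quotientTopology_eq_DA_topology
    {X : Type*} [MetricSpace X] [CompactSpace X]
    (A : Set X) (hA : IsClosed A) (hAne : A.Nonempty)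
    (U : Set (Quot (collapseRel A))) :
    IsOpen U ↔
      ∀ x : X, Quot.mk (collapseRel A) x ∈ U →
        ∃ ε > 0, ∀ y : X, DA A x y < ε → Quot.mk (collapseRel A) y ∈ U := by
  rw [← isQuotientMap_quot_mk.isOpen_preimage]
  refine ⟨fun hU x hx => ?_, isOpen_of_forall_DA_lt_imp_mem A⟩
  rcases subset_or_disjoint_preimage_quot_mk A U with hAU | hAU
  · exact exists_DA_lt_imp_mem_of_subset hA.isCompact hAne hU hAU hx
  · exact exists_DA_lt_imp_mem_of_disjoint hA hAne hU hAU hx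
end

section
/- Let X be a compact metric space and F a closed relation on X. If for each (x,y) ∈ F there exist a positive integer n and a point z = (z_1,...,z_{n+1}) with z_1 = y, z_{n+1} = x, and (z_i, z_{i+1}) ∈ F for all i ≤ n, then the set of periodic points of the shift map σ_F^+ is dense in the Mahavier product X_F^+. -/
/-!
Every point of `X_F^+` is approximated by periodic points agreeing with it on longer and longer
initial segments. Given `x ∈ X_F^+` and `N`, reversing each edge `(x k, x (k+1))` by the
hypothesis yields an `F`-chain from `x (N+1)` back to `x 0`. Following `x` up to time `N+1` and
then this chain gives a closed `F`-chain through `x 0, …, x N`, and repeating it forever is a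
periodic point of the shift.
-/

/-- The one-sided Mahavier product of a closed relation `F` on `X`. -/
def MahavierPlus {X : Type*} (F : Set (X × X)) : Set (ℕ → X) :=
  {x | ∀ i : ℕ, (x i, x (i + 1)) ∈ F}

/-- The shift map on sequences. -/
def shiftMap {X : Type*} (x : ℕ → X) : ℕ → X := fun i => x (i + 1)

theorem shiftMap_iterate_apply {X : Type*} (x : ℕ → X) (n i : ℕ) :
    shiftMap^[n] x i = x (i + n) := by
  induction n generalizing x with
  | zero => rfl
  | succ n ih => rw [Function.iterate_succ_apply, ih, shiftMap, Nat.add_assoc]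

section Chains

variable {X : Type*} (F : Set (X × X))

def IsFChain (n : ℕ) (z : ℕ → X) : Prop :=
  ∀ i < n, (z i, z (i + 1)) ∈ F

def FChainReachable (a b : X) : Prop :=
  ∃ n z, z 0 = a ∧ z n = b ∧ IsFChain F n z

def appendSeq (z : ℕ → X) (n : ℕ) (w : ℕ → X) : ℕ → X :=
  fun i => if i ≤ n then z i else w (i - n)

variable {F}

theorem appendSeq_of_le {z w : ℕ → X} {n i : ℕ} (hi : i ≤ n) : appendSeq z n w i = z i :=
  if_pos hi

theorem appendSeq_add {z w : ℕ → X} {n : ℕ} (hzw : z n = w 0) (j : ℕ) :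
    appendSeq z n w (n + j) = w j := by
  rcases j with _ | j
  · simpa [appendSeq] using hzw
  · simp [appendSeq]

theorem IsFChain.append {z w : ℕ → X} {n m : ℕ} (hz : IsFChain F n z) (hw : IsFChain F m w)
    (hzw : z n = w 0) : IsFChain F (n + m) (appendSeq z n w) := by
  intro i hi
  rcases lt_or_ge i n with hin | hni
  · rw [appendSeq_of_le hin.le, appendSeq_of_le hin]
    exact hz i hin
  · obtain ⟨j, rfl⟩ := Nat.exists_eq_add_of_le hni
    rw [appendSeq_add hzw, Nat.add_assoc, appendSeq_add hzw]
    exact hw j (by omega)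

theorem FChainReachable.refl (a : X) : FChainReachable F a a :=
  ⟨0, fun _ => a, rfl, rfl, fun _ hi => absurd hi (Nat.not_lt_zero _)⟩

theorem FChainReachable.trans {a b c : X} (hab : FChainReachable F a b)
    (hbc : FChainReachable F b c) : FChainReachable F a c := by
  obtain ⟨n, z, hz0, hzn, hz⟩ := hab
  obtain ⟨m, w, hw0, hwm, hw⟩ := hbc
  have hzw : z n = w 0 := hzn.trans hw0.symm
  exact ⟨n + m, appendSeq z n w, by rw [appendSeq_of_le n.zero_le, hz0],
    by rw [appendSeq_add hzw, hwm], hz.append hw hzw⟩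

theorem fChainReachable_start_of_mem_mahavierPlus
    (hrev : ∀ a b, (a, b) ∈ F → FChainReachable F b a) {x : ℕ → X}
    (hx : x ∈ MahavierPlus F) (k : ℕ) : FChainReachable F (x k) (x 0) := by
  induction k with
  | zero => exact .refl _
  | succ k ih => exact (hrev _ _ (hx k)).trans ih

theorem IsFChain.mod_mem_mahavierPlus {f : ℕ → X} {L : ℕ} (hf : IsFChain F L f)
    (hL : 0 < L) (hclosed : f L = f 0) : (fun i => f (i % L)) ∈ MahavierPlus F := by
  intro i
  have hnext : f ((i + 1) % L) = f (i % L + 1) := by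
    rw [← Nat.mod_add_mod]
    rcases (show i % L + 1 ≤ L from Nat.mod_lt i hL).lt_or_eq with hlt | heq
    · rw [Nat.mod_eq_of_lt hlt]
    · rw [heq, Nat.mod_self, hclosed]
  simp only [hnext]
  exact hf _ (Nat.mod_lt i hL)

theorem isPeriodicPt_shiftMap_mod (f : ℕ → X) (L : ℕ) :
    Function.IsPeriodicPt shiftMap L (fun i => f (i % L)) := by
  funext i
  rw [shiftMap_iterate_apply, Nat.add_mod_right]

theorem exists_periodic_eq_of_mem_mahavierPlus
    (hrev : ∀ a b, (a, b) ∈ F → FChainReachable F b a) {x : ℕ → X}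
    (hx : x ∈ MahavierPlus F) (N : ℕ) :
    ∃ p ∈ MahavierPlus F, (∃ n, 0 < n ∧ Function.IsPeriodicPt shiftMap n p) ∧
      ∀ i ≤ N, p i = x i := by
  obtain ⟨m, w, hw0, hwm, hw⟩ := fChainReachable_start_of_mem_mahavierPlus hrev hx (N + 1)
  have hxw : x (N + 1) = w 0 := hw0.symm
  have hL : 0 < N + 1 + m := by omega
  have hf : IsFChain F (N + 1 + m) (appendSeq x (N + 1) w) :=
    IsFChain.append (fun i _ => hx i) hw hxw
  have hclosed : appendSeq x (N + 1) w (N + 1 + m) = appendSeq x (N + 1) w 0 := by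
    rw [appendSeq_add hxw, hwm, appendSeq_of_le (N + 1).zero_le]
  refine ⟨_, hf.mod_mem_mahavierPlus hL hclosed, ⟨_, hL, isPeriodicPt_shiftMap_mod _ _⟩,
    fun i hi => ?_⟩
  rw [Nat.mod_eq_of_lt (by omega), appendSeq_of_le (by omega)]

end Chains

theorem mem_closure_of_forall_exists_eq_le {X : Type*} [TopologicalSpace X]
    {S : Set (ℕ → X)} {x : ℕ → X} (h : ∀ N, ∃ p ∈ S, ∀ i ≤ N, p i = x i) : x ∈ closure S := by
  choose p hpS hpx using h
  have hlim : Filter.Tendsto p Filter.atTop (nhds x) := tendsto_pi_nhds.2 fun i => by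
    have heq : ∀ᶠ N in Filter.atTop, x i = p N i := by
      filter_upwards [Filter.eventually_ge_atTop i] with N hN
      exact (hpx N i hN).symm
    exact tendsto_const_nhds.congr' heq
  exact mem_closure_of_tendsto hlim (.of_forall hpS)

theorem periodic_points_dense_of_chains_general
    {X : Type*} [MetricSpace X]
    (F : Set (X × X))
    (h : ∀ x y : X, (x, y) ∈ F → ∃ n : ℕ, 0 < n ∧ ∃ z : ℕ → X,
        z 0 = y ∧ z n = x ∧ ∀ i < n, (z i, z (i + 1)) ∈ F) :
    ∀ x ∈ MahavierPlus F, x ∈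
      closure {p | p ∈ MahavierPlus F ∧ ∃ n : ℕ, 0 < n ∧ shiftMap^[n] p = p} := by
  have hrev : ∀ a b, (a, b) ∈ F → FChainReachable F b a := fun a b hab =>
    let ⟨n, _, z, hz0, hzn, hz⟩ := h a b hab
    ⟨n, z, hz0, hzn, hz⟩
  intro x hx
  refine mem_closure_of_forall_exists_eq_le fun N => ?_
  obtain ⟨p, hp, hper, hpx⟩ := exists_periodic_eq_of_mem_mahavierPlus hrev hx N
  exact ⟨p, ⟨hp, hper⟩, hpx⟩

/-- If for each `(x,y) ∈ F` there is a finite `F`-chain from `y` back to `x`, then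
the set of periodic points of the shift map `σ_F^+` is dense in `X_F^+`. -/
theorem periodic_points_dense_of_chains
    {X : Type*} [MetricSpace X] [CompactSpace X]
    (F : Set (X × X)) (hF : IsClosed F)
    (h : ∀ x y : X, (x, y) ∈ F → ∃ n : ℕ, 0 < n ∧ ∃ z : ℕ → X,
        z 0 = y ∧ z n = x ∧ ∀ i < n, (z i, z (i + 1)) ∈ F) :
    ∀ x ∈ MahavierPlus F, x ∈
      closure {p | p ∈ MahavierPlus F ∧ ∃ n : ℕ, 0 < n ∧ shiftMap^[n] p = p} :=
  periodic_points_dense_of_chains_general F h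
end

section
/- Let (X,f) be a dynamical system with f surjective, and let σ be the shift homeomorphism on lim←(X,f). Then (X,f) is transitive if and only if (lim←(X,f), σ^{-1}) is transitive. -/
/-!
On the inverse limit, `σ⁻¹` is just `f` applied coordinatewise, so a point of `lim←(X,f)` and
its `σ⁻ⁿ`-image are related in each coordinate by `f^[n]`. Every open set meeting the inverse limit
contains a cylinder `{y | y k ∈ W}` for all large `k`, and by surjectivity of `f` every point of `X`
occurs as the `k`-th coordinate of a point of the inverse limit, so transitivity passes between `X` and `lim←(X,f)` one coordinate at a time.
-/

/-- The inverse limit of a single map `f : X → X`. -/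
def InvLim {X : Type*} (f : X → X) : Set (ℕ → X) :=
  {x | ∀ i : ℕ, x i = f (x (i + 1))}

/-- The inverse of the shift homeomorphism on the inverse limit:
`σ⁻¹(x₁,x₂,…) = (f(x₁),x₁,x₂,…)`. -/
def shiftInv {X : Type*} (f : X → X) (x : ℕ → X) : ℕ → X :=
  fun i => match i with
  | 0 => f (x 0)
  | i + 1 => x i

open Filter Function

namespace InvLim

variable {X : Type*} {f : X → X} {x : ℕ → X}

theorem apply_eq_iterate_apply_add (hx : x ∈ InvLim f) (i n : ℕ) :
    x i = f^[n] (x (i + n)) := by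
  induction n with
  | zero => rfl
  | succ n ih => rw [ih, hx (i + n), iterate_succ_apply]; rfl

theorem comp_mem_of_commute {g : X → X} (hg : Function.Commute f g) (hx : x ∈ InvLim f) :
    g ∘ x ∈ InvLim f := fun i => by
  change g (x i) = f (g (x (i + 1)))
  rw [hx i, hg.eq]

theorem iterate_apply_mem {g : X → X} (hg : RightInverse g f) (z : X) :
    (fun i => g^[i] z) ∈ InvLim f := fun i => by
  simp only [iterate_succ_apply', hg _]

theorem exists_mem_apply_eq (hsurj : Surjective f) (z : X) (k : ℕ) :
    ∃ x ∈ InvLim f, x k = z :=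
  have hg := rightInverse_surjInv hsurj
  ⟨f^[k] ∘ fun i => (surjInv hsurj)^[i] z,
    comp_mem_of_commute (Function.Commute.self_iterate f k) (iterate_apply_mem hg z), hg.iterate k z⟩

theorem shiftInv_eq_comp (hx : x ∈ InvLim f) : shiftInv f x = f ∘ x := by
  funext i
  cases i with
  | zero => rfl
  | succ i => exact hx i

theorem iterate_shiftInv_eq_comp (hx : x ∈ InvLim f) (n : ℕ) :
    (shiftInv f)^[n] x = f^[n] ∘ x := by
  induction n generalizing x with
  | zero => rfl
  | succ n ih =>
    rw [iterate_succ_apply, shiftInv_eq_comp hx,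
      ih (comp_mem_of_commute (Function.Commute.refl f) hx), iterate_succ]
    rfl

theorem iterate_shiftInv_mem (hx : x ∈ InvLim f) (n : ℕ) : (shiftInv f)^[n] x ∈ InvLim f := by
  rw [iterate_shiftInv_eq_comp hx]
  exact comp_mem_of_commute (Function.Commute.self_iterate f n) hx

variable [TopologicalSpace X]

theorem eventually_exists_cylinder_subset (hf : Continuous f) {U : Set (ℕ → X)} (hU : IsOpen U)
    (hx : x ∈ U ∩ InvLim f) :
    ∀ᶠ k in atTop, ∃ W : Set X, IsOpen W ∧ x k ∈ W ∧ ∀ y ∈ InvLim f, y k ∈ W → y ∈ U := by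
  obtain ⟨I, t, ht, hIt⟩ := isOpen_pi_iff.mp hU x hx.1
  filter_upwards [(eventually_all_finset I).2 fun i _ => eventually_ge_atTop i] with k hk
  have coord {y : ℕ → X} (hy : y ∈ InvLim f) {i : ℕ} (hi : i ∈ I) :
      y i = f^[k - i] (y k) := by
    rw [apply_eq_iterate_apply_add hy i (k - i), Nat.add_sub_cancel' (hk i hi)]
  refine ⟨⋂ i ∈ I, f^[k - i] ⁻¹' t i,
    isOpen_biInter_finset fun i hi => (ht i hi).1.preimage (hf.iterate _), ?_, ?_⟩
  · exact Set.mem_iInter₂.mpr fun i hi => by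
      rw [Set.mem_preimage, ← coord hx.2 hi]
      exact (ht i hi).2
  · intro y hy hyk
    exact hIt fun i hi => (coord hy hi).symm ▸ Set.mem_iInter₂.mp hyk i hi

end InvLim

open InvLim in
theorem transitive_iff_transitive_invLim_general
    {X : Type*} [MetricSpace X]
    (f : X → X) (hf : Continuous f) (hsurj : Function.Surjective f) :
    (∀ U V : Set X, IsOpen U → IsOpen V → U.Nonempty → V.Nonempty →
        ∃ n : ℕ, (f^[n] '' U ∩ V).Nonempty) ↔
    (∀ U V : Set (ℕ → X), IsOpen U → IsOpen V →
        (U ∩ InvLim f).Nonempty → (V ∩ InvLim f).Nonempty →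
        ∃ n : ℕ, ((shiftInv f)^[n] '' (U ∩ InvLim f) ∩ (V ∩ InvLim f)).Nonempty) := by
  constructor
  · rintro hT U V hU hV ⟨u, hu⟩ ⟨v, hv⟩
    obtain ⟨k, ⟨W, hW, huk, hWU⟩, ⟨W', hW', hvk, hW'V⟩⟩ :=
      ((eventually_exists_cylinder_subset hf hU hu).and
        (eventually_exists_cylinder_subset hf hV hv)).exists
    obtain ⟨n, -, ⟨z, hzW, rfl⟩, hzW'⟩ := hT W W' hW hW' ⟨u k, huk⟩ ⟨v k, hvk⟩
    obtain ⟨x, hx, rfl⟩ := exists_mem_apply_eq hsurj z k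
    have hxn := iterate_shiftInv_mem hx n
    refine ⟨n, _, ⟨x, ⟨hWU x hx hzW, hx⟩, rfl⟩, hW'V _ hxn ?_, hxn⟩
    rwa [iterate_shiftInv_eq_comp hx]
  · rintro hT U V hU hV ⟨u, hu⟩ ⟨v, hv⟩
    obtain ⟨xu, hxu, rfl⟩ := exists_mem_apply_eq hsurj u 0
    obtain ⟨xv, hxv, rfl⟩ := exists_mem_apply_eq hsurj v 0
    obtain ⟨n, -, ⟨x, ⟨hxU, hx⟩, rfl⟩, hxV, -⟩ :=
      hT _ _ (hU.preimage (continuous_apply 0)) (hV.preimage (continuous_apply 0))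
        ⟨xu, hu, hxu⟩ ⟨xv, hv, hxv⟩
    rw [Set.mem_preimage, iterate_shiftInv_eq_comp hx] at hxV
    exact ⟨n, _, ⟨x 0, hxU, rfl⟩, hxV⟩

/-- For a surjective `f`, `(X,f)` is transitive iff `(lim←(X,f), σ⁻¹)` is transitive. -/
theorem transitive_iff_transitive_invLim
    {X : Type*} [MetricSpace X] [CompactSpace X]
    (f : X → X) (hf : Continuous f) (hsurj : Function.Surjective f) :
    (∀ U V : Set X, IsOpen U → IsOpen V → U.Nonempty → V.Nonempty →
        ∃ n : ℕ, (f^[n] '' U ∩ V).Nonempty) ↔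
    (∀ U V : Set (ℕ → X), IsOpen U → IsOpen V →
        (U ∩ InvLim f).Nonempty → (V ∩ InvLim f).Nonempty →
        ∃ n : ℕ, ((shiftInv f)^[n] '' (U ∩ InvLim f) ∩ (V ∩ InvLim f)).Nonempty) :=
  transitive_iff_transitive_invLim_general f hf hsurj
end

section
/- Let (X,f) be a dynamical system, A ⊆ X a nowhere dense closed subset with f(A) ⊆ A and f(X\A) ⊆ X\A, and ∼ the equivalence relation collapsing A to a point. Then (X,f) has sensitive dependence on initial conditions with respect to A if and only if the quotient system (X/∼, f*) has sensitive dependence on initial conditions (with respect to the metric D_A on X/∼). -/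
open Metric

/-!
Below the scale `infDist x A`, the distance `D_A` agrees with `dist` around a point `x` off the
closure of `A`, and since `A` is nowhere dense every nonempty open set contains such a point;
so a quotient witness close to `x` is a witness inside any prescribed open set around `x`.
Conversely `D_A ≤ dist`, so a pair in a small ball around `x` that `f^[n]` separates by `ε`
yields, through the triangle inequality for `D_A`, a partner of `x` separated from it by `ε / 2`.
-/

namespace DA

variable {X : Type*} [MetricSpace X] (A : Set X)

theorem eq_min (x y : X) : DA A x y = min (dist x y) (infDist x A + infDist y A) := by
  unfold DA
  split_ifs with hx hy hy <;> simp [infDist_zero_of_mem, hx, hy]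
  · exact (infDist_le_dist_of_mem hx).trans_eq (dist_comm y x)
  · exact infDist_le_dist_of_mem hy

theorem comm (x y : X) : DA A x y = DA A y x := by
  rw [eq_min, eq_min, dist_comm, add_comm]

theorem le_dist (x y : X) : DA A x y ≤ dist x y := by
  rw [eq_min]
  exact min_le_left _ _

theorem triangle (x y z : X) : DA A x z ≤ DA A x y + DA A y z := by
  simp only [eq_min]
  have hxz := dist_triangle x y z
  have hx : infDist x A ≤ infDist y A + dist x y := infDist_le_infDist_add_dist
  have hz : infDist z A ≤ infDist y A + dist y z :=
    dist_comm z y ▸ infDist_le_infDist_add_dist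
  have hy : 0 ≤ infDist y A := infDist_nonneg
  have := min_le_left (dist x z) (infDist x A + infDist z A)
  have := min_le_right (dist x z) (infDist x A + infDist z A)
  rcases min_choice (dist x y) (infDist x A + infDist y A) with hxy | hxy <;>
    rcases min_choice (dist y z) (infDist y A + infDist z A) with hyz | hyz <;>
    rw [hxy, hyz] <;> linarith

theorem gt_half_or_gt_half_of_gt {ε : ℝ} {a b : X} (h : DA A a b > ε) (c : X) :
    DA A c a > ε / 2 ∨ DA A c b > ε / 2 := by
  by_contra! hc
  have := triangle A a c b
  rw [comm A a c] at this
  linarith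

theorem nonempty_of_pos {x y : X} (h : 0 < DA A x y) : A.Nonempty := by
  by_contra hA
  rw [eq_min, Set.not_nonempty_iff_eq_empty.mp hA, infDist_empty, infDist_empty, add_zero,
    min_eq_right dist_nonneg] at h
  exact h.false

theorem dist_lt_of_lt_of_le_infDist {x y : X} {δ : ℝ} (hδ : δ ≤ infDist x A)
    (h : DA A x y < δ) : dist x y < δ := by
  rw [eq_min, min_lt_iff] at h
  exact h.resolve_right fun h' ↦ (hδ.trans (le_add_of_nonneg_right infDist_nonneg)).not_gt h'

end DA

theorem sensitive_wrt_iff_quotient_sensitive_general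
    {X : Type*} [MetricSpace X]
    (f : X → X)
    (A : Set X) (hAnwd : interior (closure A) = ∅) :
    (∃ ε > (0:ℝ), ∀ U : Set X, IsOpen U → U.Nonempty →
        ∃ x ∈ U, ∃ y ∈ U, ∃ n : ℕ, 0 < n ∧
          min (dist (f^[n] x) (f^[n] y)) (infDist (f^[n] x) A + infDist (f^[n] y) A)
            > ε) ↔
    (∃ ε > (0:ℝ), ∀ x : X, ∀ δ > (0:ℝ), ∃ y : X, DA A x y < δ ∧
        ∃ n : ℕ, 0 < n ∧ DA A (f^[n] x) (f^[n] y) > ε) := by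
  simp only [← DA.eq_min]
  constructor
  · rintro ⟨ε, hε, H⟩
    refine ⟨ε / 2, by positivity, fun x δ hδ ↦ ?_⟩
    obtain ⟨x', hx', y', hy', n, hn, hsep⟩ := H (ball x δ) isOpen_ball ⟨x, mem_ball_self hδ⟩
    have close {z} (hz : z ∈ ball x δ) : DA A x z < δ :=
      (DA.le_dist A x z).trans_lt (mem_ball'.mp hz)
    rcases DA.gt_half_or_gt_half_of_gt A hsep (f^[n] x) with h | h
    · exact ⟨x', close hx', n, hn, h⟩
    · exact ⟨y', close hy', n, hn, h⟩
  · rintro ⟨ε, hε, H⟩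
    refine ⟨ε, hε, fun U hU hUne ↦ ?_⟩
    obtain ⟨x, hxU, hxA⟩ :=
      (interior_eq_empty_iff_dense_compl.mp hAnwd).inter_open_nonempty U hU hUne
    obtain ⟨y₀, -, n₀, -, hsep₀⟩ := H x 1 one_pos
    have hpos : 0 < infDist x A :=
      (infDist_pos_iff_notMem_closure (DA.nonempty_of_pos A (hε.trans hsep₀))).mp hxA
    obtain ⟨r, hr, hball⟩ := isOpen_iff.mp hU x hxU
    obtain ⟨y, hy, n, hn, hsep⟩ := H x (min r (infDist x A)) (lt_min hr hpos)
    have hxy := DA.dist_lt_of_lt_of_le_infDist A (min_le_right _ _) hy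
    exact ⟨x, hxU, y, hball (mem_ball'.mpr (hxy.trans_le (min_le_left _ _))), n, hn, hsep⟩

/-- `(X,f)` has sensitive dependence on initial conditions with respect to `A` iff
the quotient system `(X/∼, f*)` (with the metric `D_A`, expressed via representatives,
since the quotient map is a bijection classes-to-points outside `A`) has sensitive
dependence on initial conditions. -/
theorem sensitive_wrt_iff_quotient_sensitive
    {X : Type*} [MetricSpace X] [CompactSpace X]
    (f : X → X) (hf : Continuous f)
    (A : Set X) (hA : IsClosed A) (hAnwd : interior (closure A) = ∅)
    (hAinv : Set.MapsTo f A A) (hAcinv : Set.MapsTo f Aᶜ Aᶜ) :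
    (∃ ε > (0:ℝ), ∀ U : Set X, IsOpen U → U.Nonempty →
        ∃ x ∈ U, ∃ y ∈ U, ∃ n : ℕ, 0 < n ∧
          min (dist (f^[n] x) (f^[n] y)) (infDist (f^[n] x) A + infDist (f^[n] y) A)
            > ε) ↔
    (∃ ε > (0:ℝ), ∀ x : X, ∀ δ > (0:ℝ), ∃ y : X, DA A x y < δ ∧
        ∃ n : ℕ, 0 < n ∧ DA A (f^[n] x) (f^[n] y) > ε) :=
  sensitive_wrt_iff_quotient_sensitive_general f A hAnwd
end

section
/- Let (X,f) be a dynamical system, A ⊆ X a nowhere dense closed subset with f(A) ⊆ A and f(X\A) ⊆ X\A, and ∼ the equivalence relation defined by x ∼ y iff x = y or x,y ∈ A. Then the set of periodic points of f is dense in X if and only if the set of periodic points of the induced map f* on X/∼ is dense in X/∼. -/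
/-- The induced map `f*` on the quotient `X/∼`, `f*([x]) = [f(x)]`. -/
def fstar {X : Type*} (A : Set X) (f : X → X) (hAinv : Set.MapsTo f A A) :
    Quot (collapseRel A) → Quot (collapseRel A) :=
  Quot.map f (by
    rintro a b (rfl | ⟨ha, hb⟩)
    · exact Or.inl rfl
    · exact Or.inr ⟨hAinv ha, hAinv hb⟩)

open Function Set

section Collapse

variable {X : Type*} {A : Set X}

theorem collapseRel_equivalence (A : Set X) : Equivalence (collapseRel A) where
  refl _ := Or.inl rfl
  symm := by
    rintro x y (rfl | ⟨hx, hy⟩)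
    exacts [Or.inl rfl, Or.inr ⟨hy, hx⟩]
  trans := by
    rintro x y z (rfl | ⟨hx, hy⟩) hyz
    · exact hyz
    rcases hyz with rfl | ⟨-, hz⟩
    exacts [Or.inr ⟨hx, hy⟩, Or.inr ⟨hx, hz⟩]

theorem collapse_mk_eq_iff {x y : X} :
    Quot.mk (collapseRel A) x = Quot.mk _ y ↔ x = y ∨ (x ∈ A ∧ y ∈ A) :=
  Quot.eq.trans (collapseRel_equivalence A).eqvGen_iff

theorem eq_of_collapse_mk_eq {x y : X} (hx : x ∉ A)
    (h : Quot.mk (collapseRel A) x = Quot.mk _ y) : x = y :=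
  (collapse_mk_eq_iff.mp h).resolve_right fun hxy => hx hxy.1

theorem preimage_image_collapse_mk {U : Set X} (hUA : Disjoint U A) :
    Quot.mk (collapseRel A) ⁻¹' (Quot.mk _ '' U) = U := by
  refine Subset.antisymm ?_ (subset_preimage_image _ _)
  rintro x ⟨u, hu, hux⟩
  rwa [← eq_of_collapse_mk_eq (hUA.notMem_of_mem_left hu) hux]

theorem semiconj_collapse_mk_fstar (f : X → X) (hAinv : MapsTo f A A) :
    Semiconj (Quot.mk (collapseRel A)) f (fstar A f hAinv) :=
  fun _ => rfl

theorem isPeriodicPt_of_collapse_mk {f : X → X} {hAinv : MapsTo f A A} {n : ℕ} {x : X}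
    (hx : x ∉ A) (h : IsPeriodicPt (fstar A f hAinv) n (Quot.mk _ x)) : IsPeriodicPt f n x := by
  have hmk : Quot.mk (collapseRel A) (f^[n] x) = Quot.mk _ x :=
    ((semiconj_collapse_mk_fstar f hAinv).iterate_right n x).trans h.eq
  exact (eq_of_collapse_mk_eq hx hmk.symm).symm

variable [TopologicalSpace X]

theorem isOpen_image_collapse_mk {U : Set X} (hU : IsOpen U) (hUA : Disjoint U A) :
    IsOpen (Quot.mk (collapseRel A) '' U) := by
  rw [← isQuotientMap_quot_mk.isOpen_preimage, preimage_image_collapse_mk hUA]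
  exact hU

theorem Dense.periodicPts_fstar {f : X → X} (hAinv : MapsTo f A A)
    (hf : Dense (periodicPts f)) : Dense (periodicPts (fstar A f hAinv)) := by
  have hdense : Dense (Quot.mk (collapseRel A) '' periodicPts f) :=
    Quot.mk_surjective.denseRange.dense_image continuous_quot_mk hf
  refine hdense.mono ?_
  rintro _ ⟨x, ⟨n, hn, hx⟩, rfl⟩
  exact ⟨n, hn, hx.map (semiconj_collapse_mk_fstar f hAinv)⟩

theorem dense_periodicPts_of_dense_fstar {f : X → X} (hAinv : MapsTo f A A)
    (hAnwd : interior (closure A) = ∅) (hf : Dense (periodicPts (fstar A f hAinv))) :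
    Dense (periodicPts f) := by
  rw [dense_iff_inter_open]
  intro U hU hUne
  set V := U ∩ (closure A)ᶜ
  have hVA : Disjoint V A :=
    disjoint_left.mpr fun x hx hxA => hx.2 (subset_closure hxA)
  have hVne : V.Nonempty :=
    (interior_eq_empty_iff_dense_compl.mp hAnwd).inter_open_nonempty U hU hUne
  have hVopen : IsOpen V := hU.inter isClosed_closure.isOpen_compl
  obtain ⟨_, ⟨x, hxV, rfl⟩, n, hn, hx⟩ :=
    hf.inter_open_nonempty _ (isOpen_image_collapse_mk hVopen hVA) (hVne.image _)
  exact ⟨x, hxV.1, n, hn, isPeriodicPt_of_collapse_mk (hVA.notMem_of_mem_left hxV) hx⟩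

end Collapse

theorem periodic_dense_iff_quotient_periodic_dense_general
    {X : Type*} [MetricSpace X]
    (f : X → X)
    (A : Set X) (hAnwd : interior (closure A) = ∅)
    (hAinv : Set.MapsTo f A A) :
    Dense {p : X | ∃ n : ℕ, 0 < n ∧ f^[n] p = p} ↔
    Dense {q : Quot (collapseRel A) |
      ∃ n : ℕ, 0 < n ∧ (fstar A f hAinv)^[n] q = q} :=
  ⟨Dense.periodicPts_fstar hAinv, dense_periodicPts_of_dense_fstar hAinv hAnwd⟩

/-- For a nowhere dense closed invariant `A` (with invariant complement), the set of
periodic points of `f` is dense in `X` iff the set of periodic points of the induced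
map `f*` is dense in `X/∼`. -/
theorem periodic_dense_iff_quotient_periodic_dense
    {X : Type*} [MetricSpace X] [CompactSpace X]
    (f : X → X) (hf : Continuous f)
    (A : Set X) (hA : IsClosed A) (hAnwd : interior (closure A) = ∅)
    (hAinv : Set.MapsTo f A A) (hAcinv : Set.MapsTo f Aᶜ Aᶜ) :
    Dense {p : X | ∃ n : ℕ, 0 < n ∧ f^[n] p = p} ↔
    Dense {q : Quot (collapseRel A) |
      ∃ n : ℕ, 0 < n ∧ (fstar A f hAinv)^[n] q = q} :=
  periodic_dense_iff_quotient_periodic_dense_general f A hAnwd hAinv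
end

section
/- Let (X,f) be a dynamical system, A a non-empty closed subset of X with f(A) ⊆ A, f surjective, and σ the shift homeomorphism on lim←(X,f). If (X,f) has sensitive dependence on initial conditions with respect to A, then (lim←(X,f), σ^{-1}) has sensitive dependence on initial conditions with respect to lim←(A, f|_A), where the inverse limit carries the product metric ρ(x,y) = max_k d(x_k,y_k)/2^k. -/
open Metric

/-- The product metric `ρ(x,y) = max_k d(x_k,y_k)/2^k` (indices starting at 1). -/
noncomputable def rho {X : Type*} [MetricSpace X] (x y : ℕ → X) : ℝ :=
  ⨆ k : ℕ, dist (x k) (y k) / 2 ^ (k + 1)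

/-- Distance of a point to a set with respect to `ρ`. -/
noncomputable def rhoDist {X : Type*} [MetricSpace X] (x : ℕ → X)
    (S : Set (ℕ → X)) : ℝ :=
  sInf {r : ℝ | ∃ a ∈ S, r = rho x a}

/-!
A basic open set of the product topology constrains finitely many coordinates, and on a
thread of `lim←(X,f)` each of them is an iterate of the `N`-th one; so an open `V ∋ z N`
controls membership in `U` for every thread through `V`. Shrinking `V` so that the first
`N` iterates stay `ε/2`-close forces the sensitivity time `n` beyond `N`. Threads through the
two sensitive points `p, q` at coordinate `N` (they exist as `f` is onto) have, after `n - N`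
steps of `σ⁻¹`, `0`-th coordinates `fⁿ p, fⁿ q`, and `ρ` dominates half their distance.
Compactness makes `lim←(A, f|_A)` non-empty, so its `ρ`-distance is not the junk `sInf ∅ = 0`.
-/

section InverseLimit

variable {X : Type*} {f : X → X}

theorem iterate_apply_of_mem_invLim {x : ℕ → X} (hx : x ∈ InvLim f) {i j : ℕ}
    (hij : i ≤ j) :
    f^[j - i] (x j) = x i := by
  obtain ⟨k, rfl⟩ := Nat.exists_eq_add_of_le hij
  rw [Nat.add_sub_cancel_left]
  induction k with
  | zero => rfl
  | succ k ih => rw [Function.iterate_succ_apply, ← add_assoc, ← hx, ih (Nat.le_add_right i k)]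

theorem shiftInv_iterate_apply_zero (x : ℕ → X) (m : ℕ) :
    ((shiftInv f)^[m] x) 0 = f^[m] (x 0) := by
  induction m with
  | zero => rfl
  | succ m ih => rw [Function.iterate_succ_apply', Function.iterate_succ_apply', ← ih]; rfl

theorem exists_mem_invLim_apply_eq (hf : Function.Surjective f) (N : ℕ) (p : X) :
    ∃ x ∈ InvLim f, x N = p := by
  set g := Function.surjInv hf
  refine ⟨fun i => f^[N - i] (g^[i - N] p), fun i => ?_, by simp⟩
  dsimp only
  rcases lt_or_ge i N with h | h
  · rw [show N - i = N - (i + 1) + 1 by omega, show i - N = 0 by omega,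
      show i + 1 - N = 0 by omega, Function.iterate_succ_apply']
  · rw [show N - i = 0 by omega, show N - (i + 1) = 0 by omega,
      show i + 1 - N = i - N + 1 by omega, Function.iterate_succ_apply']
    exact (Function.surjInv_eq hf _).symm

theorem exists_isOpen_apply_mem_subset [TopologicalSpace X] (hf : Continuous f)
    {U : Set (ℕ → X)} (hU : IsOpen U) {z : ℕ → X} (hzU : z ∈ U) (hz : z ∈ InvLim f) :
    ∃ N, ∃ V : Set X, IsOpen V ∧ z N ∈ V ∧ ∀ x ∈ InvLim f, x N ∈ V → x ∈ U := by
  obtain ⟨I, u, hu, hIU⟩ := isOpen_pi_iff.mp hU z hzU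
  set N := I.sup id
  have hle : ∀ i ∈ I, i ≤ N := fun i hi => Finset.le_sup (f := id) hi
  refine ⟨N, ⋂ i ∈ I, f^[N - i] ⁻¹' u i,
    isOpen_biInter_finset fun i hi => (hu i hi).1.preimage (hf.iterate _), ?_, ?_⟩
  · refine Set.mem_iInter₂.mpr fun i hi => ?_
    rw [Set.mem_preimage, iterate_apply_of_mem_invLim hz (hle i hi)]
    exact (hu i hi).2
  · intro x hx hxV
    apply hIU
    intro i hi
    rw [← iterate_apply_of_mem_invLim hx (hle i hi)]
    exact Set.mem_iInter₂.mp hxV i hi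

theorem invLim_inter_setOf_forall_mem_nonempty [TopologicalSpace X] [T2Space X] (hf : Continuous f)
    {A : Set X} (hA : IsCompact A) (hAne : A.Nonempty) (hAf : Set.MapsTo f A A) :
    (InvLim f ∩ {x | ∀ i, x i ∈ A}).Nonempty := by
  set S : ℕ → Set (ℕ → X) := fun n =>
    (Set.univ.pi fun _ => A) ∩ ⋂ i ∈ Set.Iio n, {x | x i = f (x (i + 1))}
  have hclosed : ∀ n, IsClosed (S n) := fun n =>
    (isClosed_set_pi fun _ _ => hA.isClosed).inter <| isClosed_biInter fun i _ =>
      isClosed_eq (continuous_apply i) (hf.comp (continuous_apply (i + 1)))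
  have hne : ∀ n, (S n).Nonempty := by
    obtain ⟨a, ha⟩ := hAne
    refine fun n => ⟨fun i => f^[n - i] a, fun i _ => hAf.iterate _ ha, ?_⟩
    simp only [Set.mem_iInter₂, Set.mem_Iio, Set.mem_ofPred_eq]
    intro i hi
    rw [show n - i = n - (i + 1) + 1 by omega, Function.iterate_succ_apply']
  have hanti : ∀ n, S (n + 1) ⊆ S n := fun n =>
    Set.inter_subset_inter_right _ <|
      Set.biInter_mono (Set.Iio_subset_Iio n.le_succ) fun _ _ => le_rfl
  have hcompact : IsCompact (S 0) :=
    (isCompact_univ_pi fun _ => hA).of_isClosed_subset (hclosed 0) Set.inter_subset_left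
  obtain ⟨x, hx⟩ :=
    hcompact.nonempty_iInter_of_sequence_nonempty_isCompact_isClosed S hanti hne hclosed
  simp only [Set.mem_iInter] at hx
  exact ⟨x, fun i => Set.mem_iInter₂.mp (hx (i + 1)).2 i i.lt_succ_self,
    fun i => (hx 0).1 i trivial⟩

end InverseLimit

section Sensitivity

variable {X : Type*} [MetricSpace X]

theorem exists_sensitive_pair_of_lt {f : X → X} (hf : Continuous f) {A : Set X} {ε : ℝ}
    (hε : 0 < ε)
    (hs : ∀ U : Set X, IsOpen U → U.Nonempty →
      ∃ x ∈ U, ∃ y ∈ U, ∃ n : ℕ, 0 < n ∧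
        min (dist (f^[n] x) (f^[n] y)) (infDist (f^[n] x) A + infDist (f^[n] y) A) > ε)
    {U : Set X} (hU : IsOpen U) (hUne : U.Nonempty) (N : ℕ) :
    ∃ x ∈ U, ∃ y ∈ U, ∃ n : ℕ, N < n ∧
      min (dist (f^[n] x) (f^[n] y)) (infDist (f^[n] x) A + infDist (f^[n] y) A) > ε := by
  obtain ⟨c, hc⟩ := hUne
  set W := U ∩ ⋂ j ∈ Set.Iic N, {p | dist (f^[j] p) (f^[j] c) < ε / 2}
  have hW : IsOpen W := hU.inter <| (Set.finite_Iic N).isOpen_biInter fun j _ =>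
    isOpen_lt ((hf.iterate j).dist continuous_const) continuous_const
  have hcW : c ∈ W := ⟨hc, Set.mem_iInter₂.mpr fun j _ => by simpa using half_pos hε⟩
  obtain ⟨x, hx, y, hy, n, -, hmin⟩ := hs W hW ⟨c, hcW⟩
  refine ⟨x, hx.1, y, hy.1, n, ?_, hmin⟩
  by_contra! hn
  have hxc : dist (f^[n] x) (f^[n] c) < ε / 2 := Set.mem_iInter₂.mp hx.2 n hn
  have hyc : dist (f^[n] y) (f^[n] c) < ε / 2 := Set.mem_iInter₂.mp hy.2 n hn
  linarith [dist_triangle_right (f^[n] x) (f^[n] y) (f^[n] c), min_le_left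
    (dist (f^[n] x) (f^[n] y)) (infDist (f^[n] x) A + infDist (f^[n] y) A)]

variable [BoundedSpace X]

theorem dist_apply_zero_div_two_le_rho (x y : ℕ → X) : dist (x 0) (y 0) / 2 ≤ rho x y := by
  have hbdd : BddAbove (Set.range fun k => dist (x k) (y k) / 2 ^ (k + 1)) :=
    ⟨diam (Set.univ : Set X), Set.forall_mem_range.2 fun k =>
      (div_le_self dist_nonneg (one_le_pow₀ one_le_two)).trans
        (dist_le_diam_of_mem (Bornology.IsBounded.all _) trivial trivial)⟩
  simpa [rho] using le_ciSup hbdd 0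

theorem infDist_apply_zero_div_two_le_rhoDist (x : ℕ → X) {A : Set X} {S : Set (ℕ → X)}
    (hS : S.Nonempty) (hSA : ∀ a ∈ S, a 0 ∈ A) : infDist (x 0) A / 2 ≤ rhoDist x S := by
  obtain ⟨a, ha⟩ := hS
  refine le_csInf ⟨_, a, ha, rfl⟩ ?_
  rintro _ ⟨b, hb, rfl⟩
  calc infDist (x 0) A / 2 ≤ dist (x 0) (b 0) / 2 := by
        gcongr; exact infDist_le_dist_of_mem (hSA b hb)
    _ ≤ rho x b := dist_apply_zero_div_two_le_rho x b

theorem min_div_two_le_min_rho_rhoDist (x y : ℕ → X) {A : Set X} {S : Set (ℕ → X)}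
    (hS : S.Nonempty) (hSA : ∀ a ∈ S, a 0 ∈ A) :
    min (dist (x 0) (y 0)) (infDist (x 0) A + infDist (y 0) A) / 2 ≤
      min (rho x y) (rhoDist x S + rhoDist y S) := by
  have hd := dist_apply_zero_div_two_le_rho x y
  have hx := infDist_apply_zero_div_two_le_rhoDist x hS hSA
  have hy := infDist_apply_zero_div_two_le_rhoDist y hS hSA
  exact le_min (by linarith [min_le_left (dist (x 0) (y 0)) (infDist (x 0) A + infDist (y 0) A)])
    (by linarith [min_le_right (dist (x 0) (y 0)) (infDist (x 0) A + infDist (y 0) A)])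

end Sensitivity

/-- If `f` is surjective and `(X,f)` has sensitive dependence on initial conditions
with respect to `A` (closed, non-empty, `f(A) ⊆ A`), then `(lim←(X,f), σ⁻¹)` has
sensitive dependence on initial conditions with respect to `lim←(A, f|_A)`. -/
theorem invLim_sensitive_wrt
    {X : Type*} [MetricSpace X] [CompactSpace X]
    (f : X → X) (hf : Continuous f) (hsurj : Function.Surjective f)
    (A : Set X) (hA : IsClosed A) (hAne : A.Nonempty) (hAinv : Set.MapsTo f A A)
    (hsens : ∃ ε > (0:ℝ), ∀ U : Set X, IsOpen U → U.Nonempty →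
        ∃ x ∈ U, ∃ y ∈ U, ∃ n : ℕ, 0 < n ∧
          min (dist (f^[n] x) (f^[n] y)) (infDist (f^[n] x) A + infDist (f^[n] y) A)
            > ε) :
    ∃ ε > (0:ℝ), ∀ U : Set (ℕ → X), IsOpen U → (U ∩ InvLim f).Nonempty →
        ∃ x ∈ U ∩ InvLim f, ∃ y ∈ U ∩ InvLim f, ∃ n : ℕ, 0 < n ∧
          min (rho ((shiftInv f)^[n] x) ((shiftInv f)^[n] y))
            (rhoDist ((shiftInv f)^[n] x) {z | z ∈ InvLim f ∧ ∀ i, z i ∈ A} +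
              rhoDist ((shiftInv f)^[n] y) {z | z ∈ InvLim f ∧ ∀ i, z i ∈ A})
            > ε := by
  obtain ⟨ε, hε, hs⟩ := hsens
  have hL := invLim_inter_setOf_forall_mem_nonempty hf hA.isCompact hAne hAinv
  refine ⟨ε / 2, half_pos hε, fun U hU ⟨z, hzU, hz⟩ => ?_⟩
  obtain ⟨N, V, hV, hzV, hVU⟩ := exists_isOpen_apply_mem_subset hf hU hzU hz
  obtain ⟨p, hp, q, hq, n, hNn, hpq⟩ := exists_sensitive_pair_of_lt hf hε hs hV ⟨_, hzV⟩ N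
  obtain ⟨x, hx, rfl⟩ := exists_mem_invLim_apply_eq hsurj N p
  obtain ⟨y, hy, rfl⟩ := exists_mem_invLim_apply_eq hsurj N q
  refine ⟨x, ⟨hVU x hx hp, hx⟩, y, ⟨hVU y hy hq, hy⟩, n - N, Nat.sub_pos_of_lt hNn, ?_⟩
  have hzero : ∀ w ∈ InvLim f, ((shiftInv f)^[n - N] w) 0 = f^[n] (w N) := fun w hw => by
    rw [shiftInv_iterate_apply_zero, ← iterate_apply_of_mem_invLim hw N.zero_le,
      ← Function.iterate_add_apply]
    congr 1
    omega
  have key := min_div_two_le_min_rho_rhoDist ((shiftInv f)^[n - N] x)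
    ((shiftInv f)^[n - N] y) (S := {z | z ∈ InvLim f ∧ ∀ i, z i ∈ A}) hL fun a ha => ha.2 0
  rw [hzero x hx, hzero y hy] at key
  linarith
end
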